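/- Let V = {V(·|·,s)}_{s∈S} and V* = {V*(·|·,s*)}_{s*∈S*} be two AVCs from a finite input alphabet X to a finite output alphabet Z with finite state sets S and S*, and suppose D(V,V*) ≤ ε for some ε ∈ (0,1). Let n ∈ ℕ, let J be a finite message set with uniform distribution, let G_n be a finite set with distribution P_Γ ∈ P(G_n), and for each γ ∈ G_n let E_γ(xⁿ|j) be a stochastic encoder; for a state sequence sⁿ and γ ∈ G_n let P_{sⁿ,γ}(j,zⁿ) = (1/|J|)·∑_{xⁿ} ∏_{i=1}^n V(z_i|x_i,s_i) · E_γ(xⁿ|j), and analogously P*_{s*ⁿ,γ} for V*. If max_{sⁿ∈Sⁿ} (1/n)·∑_{γ∈G_n} P_Γ(γ)·I(J;Zⁿ‖P_{sⁿ,γ}) = δ_n, then max_{s*ⁿ∈S*ⁿ} (1/n)·∑_{γ∈G_n} P_Γ(γ)·I(J;Zⁿ‖P*_{s*ⁿ,γ}) ≤ δ_n + 4ε·log|Z| + 4H₂(ε). -/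

import Mathlib

open Real Finset

/-- Binary entropy function (base 2). -/
noncomputable def H2 (ε : ℝ) : ℝ :=
  -(ε * Real.logb 2 ε) - (1 - ε) * Real.logb 2 (1 - ε)

/-- `p` is a probability distribution on the finite alphabet `α`. -/
def IsProb {α : Type*} [Fintype α] (p : α → ℝ) : Prop :=
  (∀ a, 0 ≤ p a) ∧ ∑ a, p a = 1

/-- `W` is a channel (stochastic matrix) from `X` to `Y`. -/
def IsChannel {X Y : Type*} [Fintype Y] (W : X → Y → ℝ) : Prop :=
  ∀ x, (∀ y, 0 ≤ W x y) ∧ ∑ y, W x y = 1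

/-- Conditional entropy `H(Y|X‖P)` (base 2) of a joint distribution `P` on `X × Y`. -/
noncomputable def condEnt {X Y : Type*} [Fintype X] [Fintype Y] (P : X × Y → ℝ) : ℝ :=
  -∑ x : X, ∑ y : Y, P (x, y) * Real.logb 2 (P (x, y) / ∑ y' : Y, P (x, y'))

/-- Mutual information `I(U;Y‖P)` (base 2) of a joint distribution `P` on `U × Y`. -/
noncomputable def mutInf {U Y : Type*} [Fintype U] [Fintype Y] (P : U × Y → ℝ) : ℝ :=
  ∑ u : U, ∑ y : Y,
    P (u, y) * Real.logb 2 (P (u, y) / ((∑ y' : Y, P (u, y')) * ∑ u' : U, P (u', y)))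

/-- Channel distance `d(W,W') = max_x ∑_y |W(y|x) − W'(y|x)|`. -/
noncomputable def dChan {X Y : Type*} [Fintype Y] (W W' : X → Y → ℝ) : ℝ :=
  ⨆ x : X, ∑ y : Y, |W x y - W' x y|

/-- Distance `D(W₁,W₂)` between two AVCs (families of channels). -/
noncomputable def Davc {X Y : Type*} [Fintype Y] {S₁ S₂ : Type*}
    (W₁ : S₁ → X → Y → ℝ) (W₂ : S₂ → X → Y → ℝ) : ℝ :=
  max (⨆ s₂ : S₂, ⨅ s₁ : S₁, dChan (W₁ s₁) (W₂ s₂))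
      (⨆ s₁ : S₁, ⨅ s₂ : S₂, dChan (W₁ s₁) (W₂ s₂))

/-- The symmetrizability gap function
`F(σ,σ',W) = ∑_{x₁,x₂,y} |∑_s W(y|x₁,s)σ(s|x₂) − ∑_s W(y|x₂,s)σ'(s|x₁)|`. -/
noncomputable def Fsym {X Y S : Type*} [Fintype X] [Fintype Y] [Fintype S]
    (σ σ' : X → S → ℝ) (W : S → X → Y → ℝ) : ℝ :=
  ∑ x₁ : X, ∑ x₂ : X, ∑ y : Y,
    |(∑ s : S, W s x₁ y * σ x₂ s) - ∑ s : S, W s x₂ y * σ' x₁ s|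

/-- Joint distribution of a uniformly distributed message `J` and the eavesdropper output
`Zⁿ` for state sequence `sⁿ`, under the stochastic encoder `E`. -/
noncomputable def jointAVC {X Z S J : Type*} [Fintype X] [Fintype J] (n : ℕ)
    (V : S → X → Z → ℝ) (sn : Fin n → S) (E : J → (Fin n → X) → ℝ) :
    J × (Fin n → Z) → ℝ :=
  fun p => ((Fintype.card J : ℝ))⁻¹ *
    ∑ xn : Fin n → X, (∏ i : Fin n, V (sn i) (xn i) (p.2 i)) * E p.1 xn

/-!
Pick, letter by letter, a state of `V` within channel distance `ε` of the state of `V'`. For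
every value of the common randomness the leakage is `H(Zⁿ) - H(Zⁿ|J)`, and each of these two
entropies moves by at most `n (2 ε log |Z| + 2 h(ε))` nats when the eavesdropper's channel is
changed: replace the letter channels one at a time, and at each step apply Fannes' inequality
to the conditional distributions of the changed output letter given all the others. Averaging
over the common randomness and dividing by `n` gives the claim.
-/

/-- Shannon entropy in nats, also for nonnegative vectors that are not normalized. -/
noncomputable def entropy {α : Type*} [Fintype α] (p : α → ℝ) : ℝ := ∑ a, negMulLog (p a)

section Entropy

variable {α : Type*} [Fintype α]

lemma negMulLog_add_le {x y : ℝ} (hx : 0 ≤ x) (hy : 0 ≤ y) :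
    negMulLog (x + y) ≤ negMulLog x + negMulLog y := by
  have key : ∀ {u v : ℝ}, 0 ≤ u → 0 ≤ v → u * log u ≤ u * log (u + v) := by
    intro u v hu hv
    rcases hu.eq_or_lt with rfl | hu
    · simp
    · exact mul_le_mul_of_nonneg_left (log_le_log hu (by linarith)) hu.le
  have h₁ := key hx hy
  have h₂ := key hy hx
  rw [add_comm y x] at h₂
  simp only [negMulLog]
  linarith

lemma negMulLog_add_mul_log_le {x t : ℝ} (hx : 0 ≤ x) (ht : 0 < t) :
    negMulLog x + x * log t ≤ t - x := by
  rcases hx.eq_or_lt with rfl | hx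
  · simpa using ht.le
  have hscale : negMulLog x + x * log t = t * negMulLog (x / t) := by
    simp only [negMulLog]
    rw [log_div hx.ne' ht.ne']
    field_simp
    ring
  calc negMulLog x + x * log t = t * negMulLog (x / t) := hscale
    _ ≤ t * (1 - x / t) :=
      mul_le_mul_of_nonneg_left (negMulLog_le_one_sub_self (by positivity)) ht.le
    _ = t - x := by field_simp

lemma negMulLog_add_negMulLog_add_le {x y a b : ℝ} (hx : 0 ≤ x) (hy : 0 ≤ y)
    (ha : 0 < a) (hb : 0 < b) (hab : a + b = 1) :
    negMulLog x + negMulLog y + x * log a + y * log b ≤ negMulLog (x + y) := by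
  rcases (add_nonneg hx hy).eq_or_lt with hs | hs
  · obtain ⟨rfl, rfl⟩ : x = 0 ∧ y = 0 := ⟨by linarith, by linarith⟩
    simp
  have h₁ := negMulLog_add_mul_log_le hx (mul_pos ha hs)
  have h₂ := negMulLog_add_mul_log_le hy (mul_pos hb hs)
  rw [log_mul ha.ne' hs.ne'] at h₁
  rw [log_mul hb.ne' hs.ne'] at h₂
  have : (a + b) * (x + y) = x + y := by rw [hab, one_mul]
  simp only [negMulLog] at *
  nlinarith

lemma entropy_le_negMulLog_sum_add (p : α → ℝ) (hp : ∀ a, 0 ≤ p a) :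
    entropy p ≤ negMulLog (∑ a, p a) + (∑ a, p a) * log (Fintype.card α) := by
  cases isEmpty_or_nonempty α
  · simp [entropy]
  have hN : 0 < (Fintype.card α : ℝ) := by exact_mod_cast Fintype.card_pos
  have hJ := concaveOn_negMulLog.le_map_sum (t := univ) (w := fun _ => (Fintype.card α : ℝ)⁻¹)
    (p := p) (fun _ _ => by positivity) (by simp [hN.ne']) (fun a _ => hp a)
  simp only [smul_eq_mul, ← mul_sum, negMulLog_mul] at hJ
  rw [negMulLog, log_inv] at hJ
  have := (mul_le_mul_iff_of_pos_left hN).2 hJ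
  rw [entropy]
  field_simp at this
  linarith

lemma negMulLog_sum_le_entropy (p : α → ℝ) (hp : ∀ a, 0 ≤ p a) :
    negMulLog (∑ a, p a) ≤ entropy p :=
  le_sum_of_subadditive_on_pred negMulLog (fun x => 0 ≤ x) negMulLog_zero.le
    (fun _ _ hx hy => negMulLog_add_le hx hy) (fun _ _ hx hy => add_nonneg hx hy) _
    fun a _ => hp a

lemma entropy_add_le (p q : α → ℝ) (hp : ∀ a, 0 ≤ p a) (hq : ∀ a, 0 ≤ q a) :
    entropy (p + q) ≤ entropy p + entropy q := by
  rw [entropy, entropy, entropy, ← sum_add_distrib]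
  exact sum_le_sum fun a _ => negMulLog_add_le (hp a) (hq a)

/-- Concavity of entropy, in homogeneous form. -/
lemma entropy_add_entropy_le (p q : α → ℝ) (hp : ∀ a, 0 ≤ p a) (hq : ∀ a, 0 ≤ q a)
    (hP : 0 < ∑ a, p a) (hQ : 0 < ∑ a, q a) :
    entropy p + entropy q ≤ entropy (p + q) +
      (∑ a, p a + ∑ a, q a) * binEntropy ((∑ a, q a) / (∑ a, p a + ∑ a, q a)) := by
  set P := ∑ a, p a
  set Q := ∑ a, q a
  have hc : 0 < P + Q := add_pos hP hQ
  have hterm a := negMulLog_add_negMulLog_add_le (hp a) (hq a) (div_pos hP hc) (div_pos hQ hc)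
    (by field_simp)
  have hsum := sum_le_sum fun a (_ : a ∈ univ) => hterm a
  simp only [sum_add_distrib, ← sum_mul] at hsum
  have hbin : (P + Q) * binEntropy (Q / (P + Q)) =
      -(P * log (P / (P + Q))) - Q * log (Q / (P + Q)) := by
    rw [binEntropy_eq_negMulLog_add_negMulLog_one_sub,
      show 1 - Q / (P + Q) = P / (P + Q) by field_simp; ring]
    simp only [negMulLog]
    field_simp
    ring
  rw [hbin]
  simp only [entropy, Pi.add_apply]
  linarith

lemma two_mul_sum_sub_min_eq {p q : α → ℝ} (hsum : ∑ a, q a = ∑ a, p a) :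
    2 * ∑ a, (q a - min (p a) (q a)) = ∑ a, |p a - q a| := by
  have hpt a : 2 * (q a - min (p a) (q a)) = |p a - q a| + (q a - p a) := by
    rcases le_total (p a) (q a) with h | h
    · rw [min_eq_left h, abs_of_nonpos (by linarith)]; ring
    · rw [min_eq_right h, abs_of_nonneg (by linarith)]; ring
  rw [mul_sum, sum_congr rfl fun a _ => hpt a, sum_add_distrib, sum_sub_distrib, hsum]
  ring

/-- With `r = min p q`, `q = r + d` and `p = r + e`: subadditivity bounds `H(q)` from above,
concavity bounds `H(p)` from below, and `d`, `e` have mass `∑ |p - q| / 2`. -/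
lemma entropy_sub_entropy_le_of_sum_abs_sub_le {p q : α → ℝ} (hp : ∀ a, 0 ≤ p a)
    (hq : ∀ a, 0 ≤ q a) (hsum : ∑ a, q a = ∑ a, p a) {t : ℝ} (ht₀ : 0 ≤ t) (ht : t ≤ 1 / 2)
    (hpq : ∑ a, |p a - q a| ≤ 2 * t * ∑ a, p a) :
    entropy q - entropy p ≤ (∑ a, p a) * (binEntropy t + t * log (Fintype.card α)) := by
  set r : α → ℝ := fun a => min (p a) (q a)
  set d : α → ℝ := fun a => q a - r a
  set e : α → ℝ := fun a => p a - r a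
  have hr a : 0 ≤ r a := le_min (hp a) (hq a)
  have hd a : 0 ≤ d a := sub_nonneg.2 (min_le_right _ _)
  have he a : 0 ≤ e a := sub_nonneg.2 (min_le_left _ _)
  have hq_eq : q = r + d := funext fun a => by simp [d]
  have hp_eq : p = r + e := funext fun a => by simp [e]
  set D := ∑ a, d a
  set c := ∑ a, p a
  have hc : 0 ≤ c := sum_nonneg fun a _ => hp a
  have hdD : D = ∑ a, q a - ∑ a, r a := sum_sub_distrib ..
  have heD : ∑ a, e a = c - ∑ a, r a := sum_sub_distrib ..
  have hR : ∑ a, r a = c - D := by linarith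
  have hE : ∑ a, e a = D := by linarith
  have hD : D ≤ t * c := by linarith [two_mul_sum_sub_min_eq hsum]
  have hlogN : 0 ≤ log (Fintype.card α) := log_natCast_nonneg _
  rcases (sum_nonneg fun a _ => hd a : 0 ≤ D).eq_or_lt with hD0 | hDpos
  · have hd0 : d = 0 := (Fintype.sum_eq_zero_iff_of_nonneg hd).1 hD0.symm
    have he0 : e = 0 := (Fintype.sum_eq_zero_iff_of_nonneg he).1 (hE.trans hD0.symm)
    rw [hq_eq, hp_eq, hd0, he0, sub_self]
    exact mul_nonneg hc (add_nonneg (binEntropy_nonneg ht₀ (by linarith)) (mul_nonneg ht₀ hlogN))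
  have hcpos : 0 < c := by nlinarith
  have hRpos : 0 < ∑ a, r a := by rw [hR]; nlinarith
  have hmix := entropy_add_entropy_le r e hr he hRpos (hE ▸ hDpos)
  rw [← hp_eq, hR, hE, sub_add_cancel] at hmix
  have hsplit := entropy_add_le r d hr hd
  rw [← hq_eq] at hsplit
  have hd_le := entropy_le_negMulLog_sum_add d hd
  have he_ge := negMulLog_sum_le_entropy e he
  rw [hE] at he_ge
  have hbin : binEntropy (D / c) ≤ binEntropy t :=
    binEntropy_strictMonoOn.monotoneOn ⟨by positivity, by rw [div_le_iff₀ hcpos]; nlinarith⟩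
      ⟨ht₀, by linarith⟩ (by rw [div_le_iff₀ hcpos]; linarith)
  linarith [mul_le_mul_of_nonneg_left hbin hc, mul_le_mul_of_nonneg_right hD hlogN]

lemma entropy_sub_entropy_le {p q : α → ℝ} (hp : ∀ a, 0 ≤ p a) (hq : ∀ a, 0 ≤ q a)
    (hsum : ∑ a, q a = ∑ a, p a) {ε : ℝ} (hε₀ : 0 ≤ ε) (hε₁ : ε ≤ 1)
    (hpq : ∑ a, |p a - q a| ≤ ε * ∑ a, p a) :
    entropy q - entropy p ≤
      (∑ a, p a) * (2 * ε * log (Fintype.card α) + 2 * binEntropy ε) := by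
  have hc : 0 ≤ ∑ a, p a := sum_nonneg fun a _ => hp a
  have hlogN : 0 ≤ log (Fintype.card α) := log_natCast_nonneg _
  have hbin : 0 ≤ binEntropy ε := binEntropy_nonneg hε₀ hε₁
  rcases lt_or_ge ε (1 / 2) with hε | hε
  · have h := entropy_sub_entropy_le_of_sum_abs_sub_le hp hq hsum hε₀ hε.le (by nlinarith)
    refine h.trans (mul_le_mul_of_nonneg_left ?_ hc)
    nlinarith
  · have hq_le := entropy_le_negMulLog_sum_add q hq
    have hp_ge := negMulLog_sum_le_entropy p hp
    rw [hsum] at hq_le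
    nlinarith [mul_nonneg hc hbin, mul_nonneg (mul_nonneg hc hlogN) (by linarith : 0 ≤ 2 * ε - 1)]

/-- Fannes' inequality, for nonnegative vectors of equal mass. -/
lemma abs_entropy_sub_entropy_le {p q : α → ℝ} (hp : ∀ a, 0 ≤ p a) (hq : ∀ a, 0 ≤ q a)
    (hsum : ∑ a, q a = ∑ a, p a) {ε : ℝ} (hε₀ : 0 ≤ ε) (hε₁ : ε ≤ 1)
    (hpq : ∑ a, |p a - q a| ≤ ε * ∑ a, p a) :
    |entropy p - entropy q| ≤
      (∑ a, p a) * (2 * ε * log (Fintype.card α) + 2 * binEntropy ε) := by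
  refine abs_sub_le_iff.2 ⟨?_, entropy_sub_entropy_le hp hq hsum hε₀ hε₁ hpq⟩
  rw [← hsum]
  refine entropy_sub_entropy_le hq hp hsum.symm hε₀ hε₁ ?_
  simpa only [abs_sub_comm, hsum] using hpq

end Entropy

section Channels

variable {T X Z : Type*} [Fintype T] [Fintype Z]

lemma sum_sum_mul_eq_sum {W : T → Z → ℝ} (hW : IsChannel W) (w : T → ℝ) :
    ∑ z, ∑ t, w t * W t z = ∑ t, w t := by
  rw [sum_comm]
  exact sum_congr rfl fun t _ => by rw [← mul_sum, (hW t).2, mul_one]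

lemma sum_abs_sum_mul_sub_le {W W' : T → Z → ℝ} {w : T → ℝ} (hw : ∀ t, 0 ≤ w t) {ε : ℝ}
    (hd : ∀ t, ∑ z, |W t z - W' t z| ≤ ε) :
    ∑ z, |∑ t, w t * W t z - ∑ t, w t * W' t z| ≤ ε * ∑ t, w t :=
  calc ∑ z, |∑ t, w t * W t z - ∑ t, w t * W' t z|
      ≤ ∑ z, ∑ t, w t * |W t z - W' t z| := sum_le_sum fun z _ => by
        rw [← sum_sub_distrib]
        refine (abs_sum_le_sum_abs _ _).trans_eq (sum_congr rfl fun t _ => ?_)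
        rw [← mul_sub, abs_mul, abs_of_nonneg (hw t)]
    _ = ∑ t, w t * ∑ z, |W t z - W' t z| := by rw [sum_comm]; simp only [mul_sum]
    _ ≤ ∑ t, w t * ε := sum_le_sum fun t _ => mul_le_mul_of_nonneg_left (hd t) (hw t)
    _ = ε * ∑ t, w t := by rw [← sum_mul, mul_comm]

lemma abs_sum_entropy_sub_sum_entropy_le {U : Type*} [Fintype U] {P P' : U → Z → ℝ}
    (hP : ∀ u z, 0 ≤ P u z) (hP' : ∀ u z, 0 ≤ P' u z)
    (hsum : ∀ u, ∑ z, P' u z = ∑ z, P u z) {ε : ℝ} (hε₀ : 0 ≤ ε) (hε₁ : ε ≤ 1)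
    (hd : ∀ u, ∑ z, |P u z - P' u z| ≤ ε * ∑ z, P u z) :
    |∑ u, entropy (P u) - ∑ u, entropy (P' u)| ≤
      (∑ u, ∑ z, P u z) * (2 * ε * log (Fintype.card Z) + 2 * binEntropy ε) := by
  rw [← sum_sub_distrib, sum_mul]
  exact (abs_sum_le_sum_abs _ _).trans <| sum_le_sum fun u _ =>
    abs_entropy_sub_entropy_le (hP u) (hP' u) (hsum u) hε₀ hε₁ (hd u)

end Channels

noncomputable def outputDist {ι X Z : Type*} [Fintype ι] [DecidableEq ι] [Fintype X]
    (A : ι → X → Z → ℝ) (Q : (ι → X) → ℝ) : (ι → Z) → ℝ :=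
  fun zn => ∑ xn, (∏ i, A i (xn i) (zn i)) * Q xn

section OutputDist

variable {ι X Z : Type*} [Fintype ι] [DecidableEq ι]

lemma outputDist_sum_mul [Fintype X] {J : Type*} [Fintype J] (A : ι → X → Z → ℝ)
    (w : J → ℝ) (E : J → (ι → X) → ℝ) :
    outputDist A (fun xn => ∑ j, w j * E j xn) = fun zn => ∑ j, w j * outputDist A (E j) zn := by
  ext zn
  simp only [outputDist, mul_sum]
  rw [sum_comm]
  exact sum_congr rfl fun j _ => sum_congr rfl fun xn _ => by ring

lemma sum_prod_eq_one_of_isChannel [Fintype Z] {A : ι → X → Z → ℝ} (hA : ∀ i, IsChannel (A i))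
    (xn : ι → X) : ∑ zn : ι → Z, ∏ i, A i (xn i) (zn i) = 1 := by
  rw [← Fintype.prod_sum fun i z => A i (xn i) z]
  exact prod_eq_one fun i _ => (hA i (xn i)).2

variable [Fintype X] [Fintype Z]

lemma IsProb.outputDist {A : ι → X → Z → ℝ} (hA : ∀ i, IsChannel (A i)) {Q : (ι → X) → ℝ}
    (hQ : IsProb Q) : IsProb (outputDist A Q) := by
  refine ⟨fun zn => sum_nonneg fun xn _ =>
    mul_nonneg (prod_nonneg fun i _ => (hA i (xn i)).1 (zn i)) (hQ.1 xn), ?_⟩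
  simp only [_root_.outputDist]
  rw [sum_comm]
  simp only [← sum_mul, sum_prod_eq_one_of_isChannel hA, one_mul]
  exact hQ.2

lemma entropy_outputDist_eq_sum_entropy (A : ι → X → Z → ℝ) (Q : (ι → X) → ℝ) (k : ι) :
    entropy (outputDist A Q) = ∑ u : {j // j ≠ k} → Z, entropy fun z =>
      ∑ xn, (Q xn * ∏ j : {j // j ≠ k}, A j (xn j) (u j)) * A k (xn k) z := by
  rw [entropy, ← (Equiv.funSplitAt k Z).symm.sum_comp (fun zn => negMulLog (outputDist A Q zn)),
    Fintype.sum_prod_type, sum_comm]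
  refine sum_congr rfl fun u _ => sum_congr rfl fun z _ => congrArg negMulLog ?_
  refine sum_congr rfl fun xn _ => ?_
  rw [Fintype.prod_eq_mul_prod_subtype_ne _ k]
  simp only [Equiv.funSplitAt_symm_apply, dite_true]
  rw [prod_congr rfl fun j _ => by rw [dif_neg j.2]]
  ring

/-- Given the other output letters `u`, the letter `k` is the output of `A k`, resp. `W`, on the
same mixture of inputs, so Fannes' inequality applies row by row. -/
lemma abs_entropy_outputDist_sub_update_le {A : ι → X → Z → ℝ} (hA : ∀ i, IsChannel (A i))
    {k : ι} {W : X → Z → ℝ} (hW : IsChannel W) {ε : ℝ} (hε₀ : 0 ≤ ε) (hε₁ : ε ≤ 1)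
    (hd : ∀ x, ∑ z, |A k x z - W x z| ≤ ε) {Q : (ι → X) → ℝ} (hQ : IsProb Q) :
    |entropy (outputDist A Q) - entropy (outputDist (Function.update A k W) Q)| ≤
      2 * ε * log (Fintype.card Z) + 2 * binEntropy ε := by
  set w : ({j // j ≠ k} → Z) → (ι → X) → ℝ := fun u xn =>
    Q xn * ∏ j : {j // j ≠ k}, A j (xn j) (u j)
  have hw u xn : 0 ≤ w u xn :=
    mul_nonneg (hQ.1 xn) (prod_nonneg fun j _ => (hA j (xn j)).1 (u j))
  have hAk : IsChannel fun xn : ι → X => A k (xn k) := fun xn => hA k (xn k)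
  have hWk : IsChannel fun xn : ι → X => W (xn k) := fun xn => hW (xn k)
  have hupdate : entropy (outputDist (Function.update A k W) Q) =
      ∑ u, entropy fun z => ∑ xn, w u xn * W (xn k) z := by
    rw [entropy_outputDist_eq_sum_entropy _ _ k]
    simp only [Function.update_self]
    refine sum_congr rfl fun u _ => congrArg entropy (funext fun z => sum_congr rfl fun xn _ => ?_)
    rw [prod_congr rfl fun j _ => by rw [Function.update_of_ne j.2]]
  have hmass : ∑ u, ∑ z, ∑ xn, w u xn * A k (xn k) z = 1 := by
    simp only [sum_sum_mul_eq_sum hAk, w]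
    rw [sum_comm]
    simp only [← mul_sum]
    simp only [sum_prod_eq_one_of_isChannel (fun j : {j // j ≠ k} => hA j), mul_one]
    exact hQ.2
  rw [entropy_outputDist_eq_sum_entropy A Q k, hupdate]
  have h := abs_sum_entropy_sub_sum_entropy_le
    (fun u z => sum_nonneg fun xn _ => mul_nonneg (hw u xn) ((hAk xn).1 z))
    (fun u z => sum_nonneg fun xn _ => mul_nonneg (hw u xn) ((hWk xn).1 z))
    (fun u => by rw [sum_sum_mul_eq_sum hAk, sum_sum_mul_eq_sum hWk]) hε₀ hε₁
    (fun u => by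
      rw [sum_sum_mul_eq_sum hAk]
      exact sum_abs_sum_mul_sub_le (hw u) fun xn => hd (xn k))
  rw [hmass, one_mul] at h
  exact h

/-- Hybrid argument: the letter channels are replaced one at a time. -/
lemma abs_entropy_outputDist_sub_le {A B : ι → X → Z → ℝ} (hA : ∀ i, IsChannel (A i))
    (hB : ∀ i, IsChannel (B i)) {ε : ℝ} (hε₀ : 0 ≤ ε) (hε₁ : ε ≤ 1)
    (hd : ∀ i x, ∑ z, |A i x z - B i x z| ≤ ε) {Q : (ι → X) → ℝ} (hQ : IsProb Q) :
    |entropy (outputDist A Q) - entropy (outputDist B Q)| ≤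
      Fintype.card ι * (2 * ε * log (Fintype.card Z) + 2 * binEntropy ε) := by
  suffices h : ∀ s : Finset ι,
      |entropy (outputDist A Q) - entropy (outputDist (s.piecewise B A) Q)| ≤
        #s * (2 * ε * log (Fintype.card Z) + 2 * binEntropy ε) by
    simpa using h univ
  intro s
  induction s using Finset.induction_on with
  | empty => simp
  | insert k s hk ih =>
    have hs i : IsChannel (s.piecewise B A i) := piecewise_cases s B A IsChannel (hB i) (hA i)
    have hstep := abs_entropy_outputDist_sub_update_le (k := k) hs (hB k) hε₀ hε₁
      (by simpa [piecewise_eq_of_notMem s B A hk] using hd k) hQ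
    rw [piecewise_insert, card_insert_of_notMem hk]
    calc _ ≤ _ + _ := abs_sub_le _ (entropy (outputDist (s.piecewise B A) Q)) _
      _ ≤ _ := by push_cast; linarith

end OutputDist

/-- `I(U;Y) = H(Y) - H(Y|U)` for the input distribution `w` and the channel `u ↦ P u`. -/
lemma mutInf_eq_entropy_sub {U Y : Type*} [Fintype U] [Fintype Y] {w : U → ℝ}
    (hw : ∀ u, 0 ≤ w u) {P : U → Y → ℝ} (hP : ∀ u, IsProb (P u)) :
    mutInf (fun p : U × Y => w p.1 * P p.1 p.2) =
      (entropy (fun y => ∑ u, w u * P u y) - ∑ u, w u * entropy (P u)) / log 2 := by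
  have hterm u y :
      w u * P u y * logb 2 (w u * P u y / ((∑ y', w u * P u y') * ∑ u', w u' * P u' y)) =
        -(w u * negMulLog (P u y) + w u * P u y * log (∑ u', w u' * P u' y)) / log 2 := by
    rw [← mul_sum, (hP u).2, mul_one]
    by_cases h : w u * P u y = 0
    · rcases mul_eq_zero.1 h with h | h <;> simp [h]
    obtain ⟨hwu, hPu⟩ := mul_ne_zero_iff.1 h
    have hM : 0 < ∑ u', w u' * P u' y :=
      lt_of_lt_of_le (lt_of_le_of_ne (mul_nonneg (hw u) ((hP u).1 y)) (Ne.symm h))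
        (single_le_sum (f := fun u => w u * P u y)
          (fun u _ => mul_nonneg (hw u) ((hP u).1 y)) (mem_univ u))
    rw [mul_div_mul_left _ _ hwu, logb, log_div hPu hM.ne', negMulLog]
    ring
  have hmix : ∑ u, ∑ y, w u * P u y * log (∑ u', w u' * P u' y) =
      -entropy fun y => ∑ u, w u * P u y := by
    rw [sum_comm, entropy, ← sum_neg_distrib]
    exact sum_congr rfl fun y _ => by rw [← sum_mul, negMulLog]; ring
  have hcond : ∑ u, ∑ y, w u * negMulLog (P u y) = ∑ u, w u * entropy (P u) := by
    simp only [entropy, mul_sum]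
  rw [mutInf]
  refine (sum_congr rfl fun u _ => sum_congr rfl fun y _ => hterm u y).trans ?_
  simp only [neg_div, sum_neg_distrib, ← sum_div, sum_add_distrib, hmix, hcond]
  ring

lemma mutInf_jointAVC {X Z S J : Type*} [Fintype X] [Fintype Z] [Fintype J] {n : ℕ}
    {V : S → X → Z → ℝ} (hV : ∀ s, IsChannel (V s)) (sn : Fin n → S)
    {E : J → (Fin n → X) → ℝ} (hE : ∀ j, IsProb (E j)) :
    mutInf (jointAVC n V sn E) =
      (entropy (outputDist (fun i => V (sn i)) fun xn => ∑ j, (Fintype.card J : ℝ)⁻¹ * E j xn) -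
        ∑ j, (Fintype.card J : ℝ)⁻¹ * entropy (outputDist (fun i => V (sn i)) (E j))) /
        log 2 := by
  refine (mutInf_eq_entropy_sub (w := fun _ => (Fintype.card J : ℝ)⁻¹) (fun _ => by positivity)
    fun j => (hE j).outputDist fun i => hV (sn i)).trans ?_
  simp only [outputDist_sum_mul]

lemma H2_eq_binEntropy_div_log_two (ε : ℝ) : H2 ε = binEntropy ε / log 2 := by
  simp only [H2, binEntropy, logb, log_inv]
  ring

lemma mutInf_jointAVC_sub_le {X Z S S' J : Type*} [Fintype X] [Fintype Z] [Fintype J]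
    [Nonempty J] {n : ℕ} {V : S → X → Z → ℝ} {V' : S' → X → Z → ℝ} (hV : ∀ s, IsChannel (V s))
    (hV' : ∀ s, IsChannel (V' s)) {sn : Fin n → S} {sn' : Fin n → S'} {ε : ℝ} (hε₀ : 0 ≤ ε)
    (hε₁ : ε ≤ 1) (hd : ∀ i x, ∑ z, |V (sn i) x z - V' (sn' i) x z| ≤ ε)
    {E : J → (Fin n → X) → ℝ} (hE : ∀ j, IsProb (E j)) :
    mutInf (jointAVC n V' sn' E) - mutInf (jointAVC n V sn E) ≤
      n * (4 * ε * logb 2 (Fintype.card Z) + 4 * H2 ε) := by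
  set c := (Fintype.card J : ℝ)⁻¹
  set C := 2 * ε * log (Fintype.card Z) + 2 * binEntropy ε
  have hc : (Fintype.card J : ℝ) * c = 1 := mul_inv_cancel₀ (by positivity)
  have hQ : IsProb fun xn => ∑ j, c * E j xn := by
    refine ⟨fun xn => sum_nonneg fun j _ => mul_nonneg (by positivity) ((hE j).1 xn), ?_⟩
    rw [sum_comm]
    simpa [← mul_sum, (hE _).2] using hc
  have hout := abs_entropy_outputDist_sub_le (fun i => hV (sn i)) (fun i => hV' (sn' i)) hε₀ hε₁
    hd hQ
  have hcond : |∑ j, c * entropy (outputDist (fun i => V (sn i)) (E j)) -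
      ∑ j, c * entropy (outputDist (fun i => V' (sn' i)) (E j))| ≤ n * C := by
    rw [← sum_sub_distrib]
    refine (abs_sum_le_sum_abs _ _).trans ?_
    calc _ ≤ ∑ _j : J, c * (n * C) := sum_le_sum fun j _ => by
          rw [← mul_sub, abs_mul, abs_of_pos (by positivity)]
          simpa using mul_le_mul_of_nonneg_left (abs_entropy_outputDist_sub_le
            (fun i => hV (sn i)) (fun i => hV' (sn' i)) hε₀ hε₁ hd (hE j))
            (by positivity : (0 : ℝ) ≤ c)
      _ = n * C := by rw [sum_const, card_univ, nsmul_eq_mul, ← mul_assoc, hc, one_mul]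
  have hbits : 4 * ε * logb 2 (Fintype.card Z) + 4 * H2 ε = 2 * C / log 2 := by
    rw [H2_eq_binEntropy_div_log_two, logb]
    ring
  rw [mutInf_jointAVC hV sn hE, mutInf_jointAVC hV' sn' hE, hbits, div_sub_div_same,
    mul_div_assoc', div_le_div_iff_of_pos_right (log_pos one_lt_two)]
  simp only [Fintype.card_fin] at hout
  linarith [abs_le.1 hout, abs_le.1 hcond]

lemma exists_sum_abs_sub_le_of_Davc_le {X Y S₁ S₂ : Type*} [Finite X] [Fintype Y] [Finite S₁]
    [Nonempty S₁] [Finite S₂] {W₁ : S₁ → X → Y → ℝ} {W₂ : S₂ → X → Y → ℝ} {ε : ℝ}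
    (h : Davc W₁ W₂ ≤ ε) : ∃ σ : S₂ → S₁, ∀ s₂ x, ∑ y, |W₁ (σ s₂) x y - W₂ s₂ x y| ≤ ε := by
  have hclose s₂ : ∃ s₁, dChan (W₁ s₁) (W₂ s₂) ≤ ε := by
    obtain ⟨s₁, hs₁⟩ := exists_eq_ciInf_of_finite (f := fun s₁ => dChan (W₁ s₁) (W₂ s₂))
    exact ⟨s₁, hs₁ ▸ (le_ciSup (Set.finite_range _).bddAbove s₂).trans ((le_max_left _ _).trans h)⟩
  choose σ hσ using hclose
  exact ⟨σ, fun s₂ x => (le_ciSup (Set.finite_range _).bddAbove x).trans (hσ s₂)⟩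

lemma mul_sum_mutInf_jointAVC_sub_le {X Z S S' J G : Type*} [Fintype X] [Fintype Z]
    [Fintype J] [Nonempty J] [Fintype G] {n : ℕ} {V : S → X → Z → ℝ} {V' : S' → X → Z → ℝ}
    (hV : ∀ s, IsChannel (V s)) (hV' : ∀ s, IsChannel (V' s)) {sn : Fin n → S}
    {sn' : Fin n → S'} {ε : ℝ} (hε₀ : 0 ≤ ε) (hε₁ : ε ≤ 1)
    (hd : ∀ i x, ∑ z, |V (sn i) x z - V' (sn' i) x z| ≤ ε) {PΓ : G → ℝ} (hPΓ : IsProb PΓ)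
    {E : G → J → (Fin n → X) → ℝ} (hE : ∀ γ j, IsProb (E γ j)) :
    1 / (n : ℝ) * ∑ γ, PΓ γ * mutInf (jointAVC n V' sn' (E γ)) ≤
      1 / (n : ℝ) * ∑ γ, PΓ γ * mutInf (jointAVC n V sn (E γ)) +
        (4 * ε * logb 2 (Fintype.card Z) + 4 * H2 ε) := by
  have hB : 0 ≤ 4 * ε * logb 2 (Fintype.card Z) + 4 * H2 ε := by
    have := binEntropy_nonneg hε₀ hε₁
    rw [H2_eq_binEntropy_div_log_two, logb]
    positivity
  set B := 4 * ε * logb 2 (Fintype.card Z) + 4 * H2 ε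
  have havg : ∑ γ, PΓ γ * mutInf (jointAVC n V' sn' (E γ)) ≤
      ∑ γ, PΓ γ * mutInf (jointAVC n V sn (E γ)) + n * B :=
    calc _ ≤ ∑ γ, PΓ γ * (mutInf (jointAVC n V sn (E γ)) + n * B) :=
          sum_le_sum fun γ _ => mul_le_mul_of_nonneg_left
            (sub_le_iff_le_add'.1 (mutInf_jointAVC_sub_le hV hV' hε₀ hε₁ hd (hE γ))) (hPΓ.1 γ)
      _ = _ := by simp only [mul_add, sum_add_distrib, ← sum_mul, hPΓ.2, one_mul]
  have hn : 1 / (n : ℝ) * (n * B) ≤ B := by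
    rcases eq_or_ne (n : ℝ) 0 with h | h
    · simpa [h] using hB
    · rw [← mul_assoc, one_div_mul_cancel h, one_mul]
  calc _ ≤ 1 / (n : ℝ) * (∑ γ, PΓ γ * mutInf (jointAVC n V sn (E γ)) + n * B) :=
        mul_le_mul_of_nonneg_left havg (by positivity)
    _ ≤ _ := by rw [mul_add]; linarith

/-- robustness of the weak-secrecy information leakage of a common-randomness
assisted code under perturbation of the eavesdropper AVC. -/
theorem weak_secrecy_robustness_CR {X Z S S' : Type*}
    [Fintype X] [Fintype Z] [Fintype S] [Fintype S'] [Nonempty S] [Nonempty S']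
    {ε : ℝ} (hε : ε ∈ Set.Ioo (0 : ℝ) 1)
    (V : S → X → Z → ℝ) (V' : S' → X → Z → ℝ)
    (hV : ∀ s, IsChannel (V s)) (hV' : ∀ s, IsChannel (V' s))
    (hD : Davc V V' ≤ ε)
    (n : ℕ) {J : Type*} [Fintype J] [Nonempty J]
    {G : Type*} [Fintype G] (PΓ : G → ℝ) (hPΓ : IsProb PΓ)
    (E : G → J → (Fin n → X) → ℝ)
    (hE : ∀ γ j, (∀ xn, 0 ≤ E γ j xn) ∧ ∑ xn : Fin n → X, E γ j xn = 1)
    (δn : ℝ)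
    (hδ : (⨆ sn : Fin n → S,
        (1 / (n : ℝ)) * ∑ γ : G, PΓ γ * mutInf (jointAVC n V sn (E γ))) = δn) :
    (⨆ sn : Fin n → S',
        (1 / (n : ℝ)) * ∑ γ : G, PΓ γ * mutInf (jointAVC n V' sn (E γ))) ≤
      δn + 4 * ε * Real.logb 2 (Fintype.card Z) + 4 * H2 ε := by
  obtain ⟨σ, hσ⟩ := exists_sum_abs_sub_le_of_Davc_le hD
  refine ciSup_le fun sn' => ?_
  have hleak := hδ ▸ le_ciSup
    (f := fun sn => 1 / (n : ℝ) * ∑ γ, PΓ γ * mutInf (jointAVC n V sn (E γ)))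
    (Set.finite_range _).bddAbove (fun i => σ (sn' i))
  have hcompare := mul_sum_mutInf_jointAVC_sub_le hV hV' hε.1.le hε.2.le
    (fun i => hσ (sn' i)) hPΓ hE
  linarith
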